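/- Let n ≥ 1, m ≥ 1, α > 0, μ > 0, L ≥ 0, and let f : ℝⁿ → ℝ be L-smooth. Then for every p ∈ ℝⁿ, ‖∇f(p) − 𝔼[(n/(2mα²μ)) • Σ_{i=1}^{m} (f(p + μ•vᵢ) − f(p − μ•vᵢ)) • vᵢ]‖ ≤ L·n·α·μ/2, where the expectation is over v₁, …, v_m drawn independently from the uniform probability measure σ_α on the origin-centered sphere of radius α (i.e. the integral over the m-fold product measure σ_α^⊗m). -/

import Mathlib

open MeasureTheory Module Set
open scoped RealInnerProductSpace

/-!
Comparing `t ↦ f (x + t • d)` with its tangent line, the fencing form of the mean value theorem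
and the Lipschitz bound on `∇f` give `|f (p + μ v) - f (p - μ v) - 2μ ⟪∇f p, v⟫| ≤ L μ² ‖v‖²`.
For a rotation-invariant probability measure `σ` on the sphere of radius `α` in `ℝⁿ`,
`∫ ⟪g, v⟫ v dσ = (α² / n) g`: reflections show that `∫ ⟪g, v⟫² dσ` depends only on `‖g‖`,
summing over an orthonormal basis gives `∫ ‖v‖² dσ = α²` and fixes the constant, and
polarization turns the quadratic identity into the vector one. Hence the noiseless estimator
`(n / (2α²μ)) ∫ 2μ ⟪∇f p, v⟫ v dσ` is exactly `∇f p`. The ensembled estimator has the mean of a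
single sample, so its bias is at most `(n / (2α²μ)) · Lμ²α² · α = Lnαμ/2`.
-/

section Smooth

variable {E : Type*} [NormedAddCommGroup E] [InnerProductSpace ℝ E] [CompleteSpace E]
  {f : E → ℝ} {L : ℝ}

theorem abs_sub_sub_inner_gradient_le (hf : Differentiable ℝ f)
    (hL : ∀ x y, ‖gradient f x - gradient f y‖ ≤ L * ‖x - y‖) (x d : E) :
    |f (x + d) - f x - ⟪gradient f x, d⟫| ≤ L / 2 * ‖d‖ ^ 2 := by
  set φ : ℝ → ℝ := fun t => f (x + t • d) - f x - t * ⟪gradient f x, d⟫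
  have hφ : ∀ t, HasDerivAt φ ⟪gradient f (x + t • d) - gradient f x, d⟫ t := by
    intro t
    have hcurve : HasDerivAt (fun s : ℝ => x + s • d) d t := by
      simpa using ((hasDerivAt_id t).smul_const d).const_add x
    exact ((((hf _).hasGradientAt.hasFDerivAt.comp_hasDerivAt t hcurve).sub_const (f x)).sub
      ((hasDerivAt_id t).mul_const ⟪gradient f x, d⟫)).congr_deriv (by simp [inner_sub_left])
  have hB : ∀ t, HasDerivAt (fun t => L / 2 * ‖d‖ ^ 2 * t ^ 2) (L * ‖d‖ ^ 2 * t) t := by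
    intro t
    refine ((hasDerivAt_pow 2 t).const_mul (L / 2 * ‖d‖ ^ 2)).congr_deriv ?_
    push_cast
    ring
  have key := image_norm_le_of_norm_deriv_right_le_deriv_boundary (a := 0) (b := 1) (f := φ)
    (fun t _ => (hφ t).continuousAt.continuousWithinAt) (fun t _ => (hφ t).hasDerivWithinAt)
    (by simp [φ]) hB (fun t ht => ?_) (right_mem_Icc.2 zero_le_one)
  · simpa [φ] using key
  · calc ‖⟪gradient f (x + t • d) - gradient f x, d⟫‖
        ≤ ‖gradient f (x + t • d) - gradient f x‖ * ‖d‖ := norm_inner_le_norm _ _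
      _ ≤ L * ‖t • d‖ * ‖d‖ := by gcongr; simpa using hL (x + t • d) x
      _ = L * ‖d‖ ^ 2 * t := by rw [norm_smul, Real.norm_of_nonneg ht.1]; ring

theorem abs_sub_sub_two_inner_gradient_le (hf : Differentiable ℝ f)
    (hL : ∀ x y, ‖gradient f x - gradient f y‖ ≤ L * ‖x - y‖) (x d : E) :
    |f (x + d) - f (x - d) - 2 * ⟪gradient f x, d⟫| ≤ L * ‖d‖ ^ 2 := by
  have h₁ := abs_sub_sub_inner_gradient_le hf hL x d
  have h₂ := abs_sub_sub_inner_gradient_le hf hL x (-d)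
  rw [← sub_eq_add_neg, inner_neg_right, norm_neg] at h₂
  calc |f (x + d) - f (x - d) - 2 * ⟪gradient f x, d⟫|
      = |(f (x + d) - f x - ⟪gradient f x, d⟫) - (f (x - d) - f x - -⟪gradient f x, d⟫)| := by
        ring_nf
    _ ≤ L / 2 * ‖d‖ ^ 2 + L / 2 * ‖d‖ ^ 2 := (abs_sub _ _).trans (add_le_add h₁ h₂)
    _ = L * ‖d‖ ^ 2 := by ring

theorem norm_integral_two_inner_gradient_smul_sub_le [MeasurableSpace E] {σ : Measure E}
    [IsProbabilityMeasure σ] {α : ℝ} (hσ : ∀ᵐ v ∂σ, ‖v‖ = α) (hf : Differentiable ℝ f)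
    (hL : ∀ x y, ‖gradient f x - gradient f y‖ ≤ L * ‖x - y‖) (p : E) (μ : ℝ) :
    ‖∫ w, (2 * μ * ⟪gradient f p, w⟫ - (f (p + μ • w) - f (p - μ • w))) • w ∂σ‖
      ≤ L * μ ^ 2 * α ^ 3 := by
  refine (norm_integral_le_of_norm_le_const (C := L * μ ^ 2 * α ^ 3)
    (hσ.mono fun w hw => ?_)).trans_eq (by simp)
  have := abs_sub_sub_two_inner_gradient_le hf hL p (μ • w)
  rw [abs_sub_comm, real_inner_smul_right, norm_smul, mul_pow, Real.norm_eq_abs, sq_abs,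
    hw] at this
  rw [norm_smul, Real.norm_eq_abs, hw]
  calc _ ≤ L * (μ ^ 2 * α ^ 2) * α := by
        gcongr
        · exact hw ▸ norm_nonneg w
        · rwa [mul_assoc]
    _ = L * μ ^ 2 * α ^ 3 := by ring

end Smooth

theorem integrable_of_ae_norm_eq {E F : Type*} [NormedAddCommGroup E] [ProperSpace E]
    [MeasurableSpace E] [OpensMeasurableSpace E] [NormedAddCommGroup F] {σ : Measure E}
    [IsFiniteMeasure σ] {α : ℝ} (hσ : ∀ᵐ v ∂σ, ‖v‖ = α) {h : E → F} (hh : Continuous h) :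
    Integrable h σ := by
  obtain ⟨C, hC⟩ := (isCompact_sphere (0 : E) α).exists_bound_of_continuousOn hh.continuousOn
  exact .of_bound hh.aestronglyMeasurable C (hσ.mono fun v hv => hC v (by simpa using hv))

theorem integral_sum_comp_eval {ι X F : Type*} [Fintype ι] [MeasurableSpace X]
    [NormedAddCommGroup F] [NormedSpace ℝ F] {σ : Measure X} [IsProbabilityMeasure σ]
    {h : X → F} (hh : Integrable h σ) :
    ∫ v, ∑ i, h (v i) ∂Measure.pi (fun _ : ι => σ) = Fintype.card ι • ∫ x, h x ∂σ := by
  rw [integral_finsetSum _ fun i _ => integrable_comp_eval hh]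
  simp [integral_comp_eval (μ := fun _ : ι => σ) hh.aestronglyMeasurable]

section SphereMoments

variable {E : Type*} [NormedAddCommGroup E] [InnerProductSpace ℝ E]
  [MeasurableSpace E] [BorelSpace E] {σ : Measure E} {α : ℝ}

theorem integral_inner_sq_eq_of_norm_eq (hrot : ∀ R : E ≃ₗᵢ[ℝ] E, Measure.map R σ = σ)
    {g g' : E} (h : ‖g‖ = ‖g'‖) : ∫ v, ⟪g, v⟫ ^ 2 ∂σ = ∫ v, ⟪g', v⟫ ^ 2 ∂σ := by
  set R := (ℝ ∙ (g - g'))ᗮ.reflection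
  have hR : MeasurePreserving R σ σ := ⟨R.continuous.measurable, hrot R⟩
  conv_rhs => rw [← hR.integral_comp R.toHomeomorph.measurableEmbedding]
  rw [show g' = R g from (Submodule.reflection_sub h).symm]
  simp_rw [LinearIsometryEquiv.inner_map_map]

variable [FiniteDimensional ℝ E] [IsProbabilityMeasure σ]

theorem integral_inner_sq (hσ : ∀ᵐ v ∂σ, ‖v‖ = α)
    (hrot : ∀ R : E ≃ₗᵢ[ℝ] E, Measure.map R σ = σ) (g : E) :
    ∫ v, ⟪g, v⟫ ^ 2 ∂σ = α ^ 2 / finrank ℝ E * ‖g‖ ^ 2 := by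
  rcases (finrank ℝ E).eq_zero_or_pos with h0 | hpos
  · have : Subsingleton E := finrank_zero_iff.mp h0
    rw [Subsingleton.elim g 0]
    simp
  set b := stdOrthonormalBasis ℝ E
  have hsum : ∑ j, ∫ v, ⟪b j, v⟫ ^ 2 ∂σ = α ^ 2 := by
    rw [← integral_finsetSum _ fun j _ => integrable_of_ae_norm_eq hσ (by fun_prop),
      integral_congr_ae (hσ.mono fun v hv => by rw [b.sum_sq_inner_right, hv])]
    simp
  have hb : ∀ j, ∫ v, ⟪g, v⟫ ^ 2 ∂σ = ‖g‖ ^ 2 * ∫ v, ⟪b j, v⟫ ^ 2 ∂σ := by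
    intro j
    rw [integral_inner_sq_eq_of_norm_eq hrot (g' := ‖g‖ • b j)
      (by simp [norm_smul, b.orthonormal.1 j]), ← integral_const_mul]
    simp_rw [real_inner_smul_left, mul_pow]
  have hcard : (finrank ℝ E : ℝ) * ∫ v, ⟪g, v⟫ ^ 2 ∂σ = ‖g‖ ^ 2 * α ^ 2 := by
    rw [← hsum, Finset.mul_sum, ← Finset.sum_congr rfl fun j _ => hb j, Finset.sum_const,
      Finset.card_univ, Fintype.card_fin, nsmul_eq_mul]
  rw [div_mul_eq_mul_div, eq_div_iff (Nat.cast_pos.2 hpos).ne', mul_comm, hcard]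
  ring

theorem integral_inner_smul (hσ : ∀ᵐ v ∂σ, ‖v‖ = α)
    (hrot : ∀ R : E ≃ₗᵢ[ℝ] E, Measure.map R σ = σ) (g : E) :
    ∫ v, ⟪g, v⟫ • v ∂σ = (α ^ 2 / finrank ℝ E) • g := by
  refine ext_inner_left ℝ fun h => ?_
  have hpolar : ∀ v, ⟪h, ⟪g, v⟫ • v⟫ = (⟪g + h, v⟫ ^ 2 - ⟪g - h, v⟫ ^ 2) / 4 := by
    intro v
    simp only [real_inner_smul_right, inner_add_left, inner_sub_left]
    ring
  rw [← integral_inner (integrable_of_ae_norm_eq hσ (by fun_prop))]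
  simp_rw [hpolar]
  rw [integral_div, integral_sub (integrable_of_ae_norm_eq hσ (by fun_prop))
    (integrable_of_ae_norm_eq hσ (by fun_prop)), integral_inner_sq hσ hrot,
    integral_inner_sq hσ hrot, real_inner_smul_right, norm_add_sq_real, norm_sub_sq_real,
    real_inner_comm h g]
  ring

end SphereMoments

theorem gw_gradient_estimation_ensembled_general
    (n m : ℕ) (hn : 1 ≤ n) (hm : 1 ≤ m) (α μ L : ℝ) (hα : 0 < α) (hμ : 0 < μ)
    (σ : Measure (EuclideanSpace ℝ (Fin n))) [IsProbabilityMeasure σ]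
    (hσ_sphere : ∀ᵐ v ∂σ, ‖v‖ = α)
    (hσ_rot : ∀ R : EuclideanSpace ℝ (Fin n) ≃ₗᵢ[ℝ] EuclideanSpace ℝ (Fin n),
      Measure.map R σ = σ)
    (f : EuclideanSpace ℝ (Fin n) → ℝ)
    (hf_diff : Differentiable ℝ f)
    (hf_smooth : ∀ x y, ‖gradient f x - gradient f y‖ ≤ L * ‖x - y‖)
    (p : EuclideanSpace ℝ (Fin n)) :
    ‖gradient f p -
        ∫ v, ((n : ℝ) / (2 * m * α ^ 2 * μ)) •
            ∑ i : Fin m, (f (p + μ • v i) - f (p - μ • v i)) • v i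
          ∂(Measure.pi fun _ : Fin m => σ)‖
      ≤ L * n * α * μ / 2 := by
  set G := gradient f p
  set κ : ℝ := n / (2 * α ^ 2 * μ)
  have hκ : κ * (2 * μ * (α ^ 2 / n)) = 1 := by
    simp only [κ]
    field_simp
  have hfc := hf_diff.continuous
  have hmean : ∫ v, ((n : ℝ) / (2 * m * α ^ 2 * μ)) •
        ∑ i : Fin m, (f (p + μ • v i) - f (p - μ • v i)) • v i ∂(Measure.pi fun _ : Fin m => σ)
      = κ • ∫ w, (f (p + μ • w) - f (p - μ • w)) • w ∂σ := by
    rw [integral_smul, integral_sum_comp_eval (h := fun w => (f (p + μ • w) - f (p - μ • w)) • w)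
      (integrable_of_ae_norm_eq hσ_sphere (by fun_prop)),
      Fintype.card_fin, ← Nat.cast_smul_eq_nsmul ℝ, smul_smul]
    congr 1
    simp only [κ]
    field_simp
  have hgrad : G = κ • ∫ w, (2 * μ * ⟪G, w⟫) • w ∂σ := by
    simp_rw [mul_smul (2 * μ), integral_smul, integral_inner_smul hσ_sphere hσ_rot,
      finrank_euclideanSpace_fin, smul_smul, hκ, one_smul]
  rw [hmean]
  nth_rewrite 1 [hgrad]
  rw [← smul_sub, ← integral_sub (integrable_of_ae_norm_eq hσ_sphere (by fun_prop))
    (integrable_of_ae_norm_eq hσ_sphere (by fun_prop)), norm_smul,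
    Real.norm_of_nonneg (by positivity)]
  simp_rw [← sub_smul]
  calc κ * ‖∫ w, (2 * μ * ⟪G, w⟫ - (f (p + μ • w) - f (p - μ • w))) • w ∂σ‖
      ≤ κ * (L * μ ^ 2 * α ^ 3) := by
        gcongr
        exact norm_integral_two_inner_gradient_smul_sub_le hσ_sphere hf_diff hf_smooth p μ
    _ = L * n * α * μ / 2 := by simp only [κ]; field_simp

/-- For an `L`-smooth `f : ℝⁿ → ℝ`, the ensembled two-point zeroth-order
gradient estimator `(n/(2mα²μ)) • Σᵢ (f(p+μvᵢ) − f(p−μvᵢ)) • vᵢ` over `m` i.i.d. samples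
`v₁, …, v_m ∼ σ` has bias at most `Lnαμ/2` in norm. -/
theorem gw_gradient_estimation_ensembled
    (n m : ℕ) (hn : 1 ≤ n) (hm : 1 ≤ m) (α μ L : ℝ) (hα : 0 < α) (hμ : 0 < μ) (hL : 0 ≤ L)
    (σ : Measure (EuclideanSpace ℝ (Fin n))) [IsProbabilityMeasure σ]
    (hσ_sphere : ∀ᵐ v ∂σ, ‖v‖ = α)
    (hσ_rot : ∀ R : EuclideanSpace ℝ (Fin n) ≃ₗᵢ[ℝ] EuclideanSpace ℝ (Fin n),
      Measure.map R σ = σ)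
    (f : EuclideanSpace ℝ (Fin n) → ℝ)
    (hf_diff : Differentiable ℝ f)
    (hf_smooth : ∀ x y, ‖gradient f x - gradient f y‖ ≤ L * ‖x - y‖)
    (p : EuclideanSpace ℝ (Fin n)) :
    ‖gradient f p -
        ∫ v, ((n : ℝ) / (2 * m * α ^ 2 * μ)) •
            ∑ i : Fin m, (f (p + μ • v i) - f (p - μ • v i)) • v i
          ∂(Measure.pi fun _ : Fin m => σ)‖
      ≤ L * n * α * μ / 2 :=
  gw_gradient_estimation_ensembled_general n m hn hm α μ L hα hμ σ hσ_sphere hσ_rot f hf_diff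
    hf_smooth p
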